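/- Let a, b ∈ ℂ with b' := Re b. Define the set K = {(x, y) ∈ ℂ × ℝ : |x| ≤ y}. Then the point (½[|a| + |a| ∧ b']⁺ · sgn(a), ½[|a| ∨ b' + b']⁺) belongs to K and is the nearest point of K to (a, b') in ℂ × ℝ ≅ ℝ³: for all (x,y) ∈ K, |a − x|² + (b' − y)² ≥ |a − ½[|a| + |a| ∧ b']⁺ sgn(a)|² + (b' − ½[|a| ∨ b' + b']⁺)². -/

import Mathlib

/-!
Since `‖a - x‖ ≥ |‖a‖ - ‖x‖|`, with equality when `x` is a point `t · sgn a` with `0 ≤ t ≤ ‖a‖`,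
projecting `(a, b')` onto the ice cream cone reduces to projecting `(‖a‖, b')` onto the planar cone
`{(s, y) | |s| ≤ y}`. There `(r, b)` is either in the cone, or in its polar cone (and projects to
the apex), or projects orthogonally onto the boundary ray `s = y`.
-/

open Complex

/-- For `0 ≤ r`, the nearest point to `(r, b)` of the planar cone `{(s, y) | |s| ≤ y}`. -/
noncomputable def planarConeProj (r b : ℝ) : ℝ × ℝ :=
  ((1 / 2 : ℝ) * max (r + min r b) 0, (1 / 2 : ℝ) * max (max r b + b) 0)

namespace planarConeProj

variable {r b : ℝ}

theorem fst_nonneg (r b : ℝ) : 0 ≤ (planarConeProj r b).1 := by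
  unfold planarConeProj; positivity

theorem fst_le (hr : 0 ≤ r) : (planarConeProj r b).1 ≤ r := by
  unfold planarConeProj
  have : max (r + min r b) 0 ≤ 2 * r := max_le (by linarith [min_le_left r b]) (by linarith)
  linarith

theorem fst_le_snd (r b : ℝ) : (planarConeProj r b).1 ≤ (planarConeProj r b).2 := by
  simp only [planarConeProj]
  have : r + min r b ≤ max r b + b := by
    rcases le_total r b with h | h
    · simp only [min_eq_left h, max_eq_right h]; linarith
    · simp only [min_eq_right h, max_eq_left h]; rfl
  gcongr

theorem sq_dist_le (hr : 0 ≤ r) {s y : ℝ} (hsy : |s| ≤ y) :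
    (r - (planarConeProj r b).1) ^ 2 + (b - (planarConeProj r b).2) ^ 2 ≤
      (r - s) ^ 2 + (b - y) ^ 2 := by
  have hs := le_abs_self s
  have hy : 0 ≤ y := (abs_nonneg s).trans hsy
  simp only [planarConeProj]
  rcases le_or_gt r b with hrb | hbr
  · -- `(r, b)` already lies in the cone
    rw [min_eq_left hrb, max_eq_right hrb, max_eq_left (by linarith), max_eq_left (by linarith)]
    nlinarith
  rcases le_or_gt b (-r) with hbr' | hbr'
  · -- `(r, b)` lies in the polar cone, so it projects to the apex: `-b y ≥ r y ≥ r |s|`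
    rw [min_eq_right hbr.le, max_eq_left hbr.le, max_eq_right (by linarith : r + b ≤ 0)]
    nlinarith [mul_le_mul_of_nonneg_left hsy hr, mul_le_mul_of_nonneg_left hs hr,
      mul_nonneg (by linarith : 0 ≤ -b - r) hy, sq_nonneg s, sq_nonneg y]
  · -- projection onto the boundary ray `s = y`: `2 (p² + q²) ≥ (p + q)²` with `p + q ≥ r - b`
    rw [min_eq_right hbr.le, max_eq_left hbr.le, max_eq_left (by linarith)]
    nlinarith [sq_nonneg (r - s + (y - b) - (r - b)), sq_nonneg (r - s - (y - b))]

end planarConeProj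

theorem norm_ofReal_mul_div_norm_le (a : ℂ) {t : ℝ} (ht : 0 ≤ t) :
    ‖(t : ℂ) * (a / ‖a‖)‖ ≤ t := by
  rw [norm_mul, norm_real, Real.norm_of_nonneg ht, norm_div, norm_real, norm_norm]
  exact mul_le_of_le_one_right ht (div_self_le_one _)

theorem norm_sub_ofReal_mul_div_norm {a : ℂ} {t : ℝ} (ht : 0 ≤ t) (hta : t ≤ ‖a‖) :
    ‖a - (t : ℂ) * (a / ‖a‖)‖ = ‖a‖ - t := by
  rcases eq_or_ne a 0 with rfl | ha
  · simp [le_antisymm (by simpa using hta) ht]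
  have hna : (‖a‖ : ℂ) ≠ 0 := by simpa using ha
  have : a - (t : ℂ) * (a / ‖a‖) = ((‖a‖ - t) / ‖a‖ : ℝ) * a := by
    push_cast; field_simp
  rw [this, norm_mul, norm_real, Real.norm_of_nonneg (by positivity),
    div_mul_cancel₀ _ (norm_ne_zero_iff.mpr ha)]

theorem stmt_11 (a : ℂ) (b' : ℝ) :
    let K : Set (ℂ × ℝ) := {p | ‖p.1‖ ≤ p.2}
    let P : ℂ × ℝ :=
      (((1 / 2 : ℝ) * max (‖a‖ + min (‖a‖) b') 0 : ℝ) *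
          (a / (‖a‖ : ℂ)),
        (1 / 2 : ℝ) * max (max (‖a‖) b' + b') 0)
    P ∈ K ∧ ∀ p ∈ K,
      ‖a - P.1‖ ^ 2 + (b' - P.2) ^ 2 ≤
        ‖a - p.1‖ ^ 2 + (b' - p.2) ^ 2 := by
  intro K P
  set q := planarConeProj ‖a‖ b'
  have hP : P = ((q.1 : ℂ) * (a / ‖a‖), q.2) := rfl
  have hq0 := planarConeProj.fst_nonneg ‖a‖ b'
  rw [hP]
  refine ⟨(norm_ofReal_mul_div_norm_le a hq0).trans (planarConeProj.fst_le_snd _ _), ?_⟩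
  rintro ⟨x, y⟩ (hxy : ‖x‖ ≤ y)
  calc ‖a - q.1 * (a / ‖a‖)‖ ^ 2 + (b' - q.2) ^ 2
      = (‖a‖ - q.1) ^ 2 + (b' - q.2) ^ 2 := by
        rw [norm_sub_ofReal_mul_div_norm hq0 (planarConeProj.fst_le (norm_nonneg a))]
    _ ≤ (‖a‖ - ‖x‖) ^ 2 + (b' - y) ^ 2 :=
        planarConeProj.sq_dist_le (norm_nonneg a) (by rwa [abs_norm])
    _ ≤ ‖a - x‖ ^ 2 + (b' - y) ^ 2 :=
        add_le_add_left (sq_le_sq.mpr (by simpa using abs_norm_sub_norm_le a x)) _
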